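/- Let G = (V,E) be a finite simple graph and k a positive integer such that G is k-intersection polished, i.e., P^k(G) = G. Then every vertex subset S ⊆ V of size k is contained in at most one maximal clique of G. -/

import Mathlib

/-- The closed neighborhood N[v] of a vertex: `{v} ∪ {u : u adjacent to v}`. -/
def closedNbhd {V : Type*} (G : SimpleGraph V) (v : V) : Set V :=
  insert v (G.neighborSet v)

/-- The k-intersection polishing P^k(G): distinct u, v are adjacent iff |N[u] ∩ N[v]| ≥ k. -/
def polish {V : Type*} (k : ℕ) (G : SimpleGraph V) : SimpleGraph V where
  Adj u v := u ≠ v ∧ k ≤ (closedNbhd G u ∩ closedNbhd G v).ncard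
  symm := ⟨by
    rintro u v ⟨h1, h2⟩
    exact ⟨h1.symm, by rwa [Set.inter_comm]⟩⟩
  loopless := ⟨by rintro v ⟨h, -⟩; exact h rfl⟩

/-- A maximal clique: a clique contained in no strictly larger clique. -/
def IsMaxClique {V : Type*} (G : SimpleGraph V) (K : Set V) : Prop :=
  G.IsClique K ∧ ∀ t : Set V, G.IsClique t → K ⊆ t → K = t

lemma subset_closedNbhd {V : Type*} {G : SimpleGraph V} {K S : Set V} {u : V}
    (hK : G.IsClique K) (hSK : S ⊆ K) (hu : u ∈ K) : S ⊆ closedNbhd G u := by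
  intro s hs
  rcases eq_or_ne s u with rfl | hne
  · exact Set.mem_insert _ _
  · exact Set.mem_insert_of_mem _ (hK hu (hSK hs) hne.symm)

/-- If G is k-intersection polished (P^k(G) = G), then every vertex subset S of size k is
contained in at most one maximal clique of G. -/
theorem stmt8 {V : Type*} [Fintype V] (G : SimpleGraph V) (k : ℕ) (hk : 0 < k)
    (hpol : polish k G = G) (S : Set V) (hS : S.ncard = k) :
    ∀ K K' : Set V, IsMaxClique G K → IsMaxClique G K' → S ⊆ K → S ⊆ K' → K = K' := by
  intro K K' hK hK' hSK hSK'
  have hclique : G.IsClique (K ∪ K') := by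
    intro u hu v hv huv
    have key : ∀ x ∈ K, ∀ y ∈ K', x ≠ y → G.Adj x y := by
      intro x hx y hy hxy
      have hSx := subset_closedNbhd hK.1 hSK hx
      have hSy := subset_closedNbhd hK'.1 hSK' hy
      have hsub : S ⊆ closedNbhd G x ∩ closedNbhd G y :=
        Set.subset_inter hSx hSy
      have hle : k ≤ (closedNbhd G x ∩ closedNbhd G y).ncard := by
        rw [← hS]
        exact Set.ncard_le_ncard hsub (Set.toFinite _)
      rw [← hpol]
      exact ⟨hxy, hle⟩
    rcases hu with hu | hu <;> rcases hv with hv | hv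
    · exact hK.1 hu hv huv
    · exact key u hu v hv huv
    · exact (key v hv u hu huv.symm).symm
    · exact hK'.1 hu hv huv
  have h1 := hK.2 _ hclique Set.subset_union_left
  have h2 := hK'.2 _ hclique Set.subset_union_right
  exact h1.trans h2.symm
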